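/- Let (X, cl) be a finitary matroid with rank rk, δ a quasi-endomorphism, and suppose a ∈ cl^δ(B) where B ⊆ X. Then there exist natural numbers n and m such that δᵏa ∈ cl(J^{n−1}(a) ∪ J^{m+k}(B)) for all k ≥ n. -/

import Mathlib

/-!
If no `δⁿ a` lay in the closure of `J^{n-1}(a) ∪ J^∞(B)`, the sequence `a, δ a, δ² a, …` would be
independent over `J^∞(B)`, contradicting `rk(J^∞(a) | J^∞(B)) < ω`; by finitarity `J^∞(B)` may
then be replaced by some `J^m(B)`. The quasi-endomorphism inequality for `A = {c}` says that
`c ∈ cl C` implies `δ c ∈ cl (C ∪ δ C)`. Iterating it from `δⁿ a`, each step raises the jet of `B`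
by one, while `δ J^{n-1}(a) ⊆ J^{n-1}(a) ∪ {δⁿ a}` is absorbed by the starting relation.
-/

/-- A finitary matroid (pregeometry) on a type `X`, given by a closure operator. -/
structure Pregeometry (X : Type*) where
  cl : Set X → Set X
  subset_cl : ∀ A : Set X, A ⊆ cl A
  mono : ∀ A B : Set X, A ⊆ B → cl A ⊆ cl B
  cl_cl : ∀ A : Set X, cl (cl A) = cl A
  finitary : ∀ (A : Set X) (a : X), a ∈ cl A → ∃ F : Finset X, ↑F ⊆ A ∧ a ∈ cl ↑F
  exchange : ∀ (a b : X) (A : Set X), a ∈ cl (A ∪ {b}) → a ∉ cl A → b ∈ cl (A ∪ {a})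

/-- `S` is independent over `B` with respect to a closure operator. -/
def clIndep {X : Type*} (cl : Set X → Set X) (B S : Set X) : Prop :=
  ∀ s ∈ S, s ∉ cl (B ∪ (S \ {s}))

/-- The rank of `A` over `B` with respect to a closure operator: the supremum of the
cardinalities of subsets of `A` independent over `B`. -/
noncomputable def clRank {X : Type*} (cl : Set X → Set X) (A B : Set X) : Cardinal :=
  ⨆ S : {S : Set X // S ⊆ A ∧ clIndep cl B S}, Cardinal.mk S.1

/-- The set of all iterated images `δⁱ a` for `a ∈ A`, `i < ω` (the infinite jet). -/
def Jinf {X : Type*} (δ : X → X) (A : Set X) : Set X :=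
  ⋃ a ∈ A, Set.range fun i : ℕ => δ^[i] a

/-- The jet `{δⁱ a : a ∈ A, i ≤ n}`. -/
def Jle {X : Type*} (δ : X → X) (A : Set X) (n : ℕ) : Set X :=
  ⋃ a ∈ A, (fun i : ℕ => δ^[i] a) '' {i | i ≤ n}

/-- The jet `{δⁱ a : a ∈ A, i < n}` (so `Jlt δ A 0 = ∅`, playing the role of `J^{-1}`). -/
def Jlt {X : Type*} (δ : X → X) (A : Set X) (n : ℕ) : Set X :=
  ⋃ a ∈ A, (fun i : ℕ => δ^[i] a) '' {i | i < n}

/-- `δ` is a quasi-endomorphism of the pregeometry `P`: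
`rk(δA | A ∪ B ∪ δB) ≤ rk(A | B)` for all `A, B`. -/
def IsQuasiEndo {X : Type*} (P : Pregeometry X) (δ : X → X) : Prop :=
  ∀ A B : Set X, clRank P.cl (δ '' A) (A ∪ B ∪ δ '' B) ≤ clRank P.cl A B

/-- The `δ`-closure operator: `a ∈ cl^δ(B)` iff `rk(J^∞(a) | J^∞(B))` is finite. -/
noncomputable def clDelta {X : Type*} (P : Pregeometry X) (δ : X → X) : Set X → Set X :=
  fun B => {a | clRank P.cl (Jinf δ {a}) (Jinf δ B) < Cardinal.aleph0}

theorem mk_le_clRank {X : Type*} (cl : Set X → Set X) {A B S : Set X} (hSA : S ⊆ A)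
    (hS : clIndep cl B S) : Cardinal.mk S ≤ clRank cl A B :=
  le_ciSup Cardinal.bddAbove_of_small (⟨S, hSA, hS⟩ : {S : Set X // S ⊆ A ∧ clIndep cl B S})

namespace Pregeometry

variable {X : Type*} (P : Pregeometry X)

theorem cl_subset_cl_of_subset_cl {A C : Set X} (h : A ⊆ P.cl C) : P.cl A ⊆ P.cl C :=
  (P.mono _ _ h).trans (P.cl_cl C).subset

theorem clRank_singleton_eq_zero {c : X} {C : Set X} (h : c ∈ P.cl C) :
    clRank P.cl {c} C = 0 := by
  refine le_antisymm (ciSup_le' ?_) zero_le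
  rintro ⟨S, hSc, hS⟩
  suffices S = ∅ by simp [this]
  refine Set.eq_empty_of_forall_notMem fun x hx => ?_
  obtain rfl : x = c := hSc hx
  exact hS x hx (P.mono C _ Set.subset_union_left h)

theorem clIndep_insert {B S : Set X} {x : X} (hS : clIndep P.cl B S)
    (hx : x ∉ P.cl (B ∪ S)) : clIndep P.cl B (insert x S) := by
  rintro s (rfl | hs) hcl
  · refine hx (P.mono _ _ ?_ hcl)
    exact Set.union_subset_union_right B fun y ⟨hy, hne⟩ => hy.resolve_left hne
  · have hcl' : s ∈ P.cl (B ∪ (S \ {s}) ∪ {x}) := by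
      refine P.mono _ _ ?_ hcl
      rintro y (hy | ⟨rfl | hy, hne⟩)
      exacts [Or.inl (Or.inl hy), Or.inr rfl, Or.inl (Or.inr ⟨hy, hne⟩)]
    refine hx (P.mono _ _ ?_ (P.exchange s x _ hcl' (hS s hs)))
    rintro y ((hy | ⟨hy, -⟩) | rfl)
    exacts [Or.inl hy, Or.inr hy, Or.inr hs]

section Chain

variable [DecidableEq X] {B : Set X} {s : ℕ → X}
  (hs : ∀ i, s i ∉ P.cl (B ∪ ↑((Finset.range i).image s)))
include hs

theorem card_image_range_of_forall_notMem_cl (N : ℕ) : ((Finset.range N).image s).card = N := by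
  induction N with
  | zero => simp
  | succ N ih =>
    rw [Finset.range_add_one, Finset.image_insert, Finset.card_insert_of_notMem, ih]
    exact fun h => hs N (P.subset_cl _ (Or.inr h))

theorem clIndep_image_range_of_forall_notMem_cl (N : ℕ) :
    clIndep P.cl B ↑((Finset.range N).image s) := by
  induction N with
  | zero => simp [clIndep]
  | succ N ih =>
    rw [Finset.range_add_one, Finset.image_insert, Finset.coe_insert]
    exact P.clIndep_insert ih (hs N)

theorem aleph0_le_clRank_range_of_forall_notMem_cl :
    Cardinal.aleph0 ≤ clRank P.cl (Set.range s) B := by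
  refine Cardinal.aleph0_le.mpr fun N => ?_
  have hsub : ↑((Finset.range N).image s) ⊆ Set.range s := by simp
  calc (N : Cardinal) = Cardinal.mk ↑((Finset.range N).image s) := by
        rw [Cardinal.mk_coe_finset, P.card_image_range_of_forall_notMem_cl hs]
    _ ≤ clRank P.cl (Set.range s) B :=
        mk_le_clRank P.cl hsub (P.clIndep_image_range_of_forall_notMem_cl hs N)

end Chain

theorem exists_mem_cl_union_of_mem_cl_union_iUnion {C : Set X} {S : ℕ → Set X}
    (hS : Monotone S) {x : X} (hx : x ∈ P.cl (C ∪ ⋃ m, S m)) : ∃ m, x ∈ P.cl (C ∪ S m) := by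
  obtain ⟨F, hFC, hxF⟩ := P.finitary _ _ hx
  rw [Set.union_iUnion] at hFC
  have hdir : Directed (· ⊆ ·) fun m => C ∪ S m :=
    (monotone_const.sup hS).directed_le
  obtain ⟨m, hm⟩ := hdir.exists_mem_subset_of_finset_subset_biUnion hFC
  exact ⟨m, P.mono _ _ hm hxF⟩

end Pregeometry

theorem IsQuasiEndo.apply_mem_cl_union_image {X : Type*} {P : Pregeometry X} {δ : X → X}
    (hδ : IsQuasiEndo P δ) {c : X} {C : Set X} (h : c ∈ P.cl C) :
    δ c ∈ P.cl (C ∪ δ '' C) := by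
  have hcC : {c} ∪ C ∪ δ '' C ⊆ P.cl (C ∪ δ '' C) := by
    rintro x ((rfl | hx) | hx)
    exacts [P.mono C _ Set.subset_union_left h, P.subset_cl _ (Or.inl hx),
      P.subset_cl _ (Or.inr hx)]
  refine P.cl_subset_cl_of_subset_cl hcC ?_
  by_contra hδc
  -- `{δ c}` would be independent over `{c} ∪ C ∪ δ C`, of rank `1 ≤ rk({c} | C) = 0`.
  have hindep : clIndep P.cl ({c} ∪ C ∪ δ '' C) {δ c} := by
    rintro x rfl
    simpa using hδc
  have h1 := (mk_le_clRank P.cl (Set.image_singleton.symm.subset) hindep).trans (hδ {c} C)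
  simp [P.clRank_singleton_eq_zero h] at h1

section Jets

variable {X : Type*} (δ : X → X)

theorem Jlt_singleton (a : X) (n : ℕ) :
    Jlt δ {a} n = (fun i => δ^[i] a) '' Set.Iio n := by
  ext x
  simp [Jlt]

theorem Jinf_singleton (a : X) : Jinf δ {a} = Set.range fun i => δ^[i] a := by
  simp [Jinf]

theorem Jle_mono (B : Set X) : Monotone (Jle δ B) := by
  intro m m' h x hx
  simp only [Jle, Set.mem_iUnion, Set.mem_image] at hx ⊢
  obtain ⟨b, hb, i, hi, rfl⟩ := hx
  exact ⟨b, hb, i, le_trans hi h, rfl⟩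

theorem Jinf_eq_iUnion_Jle (B : Set X) : Jinf δ B = ⋃ m, Jle δ B m := by
  ext x
  simp only [Jinf, Jle, Set.mem_iUnion, Set.mem_range, Set.mem_image, Set.mem_ofPred_eq]
  constructor
  · rintro ⟨b, hb, i, rfl⟩
    exact ⟨i, b, hb, i, le_rfl, rfl⟩
  · rintro ⟨-, b, hb, i, -, rfl⟩
    exact ⟨b, hb, i, rfl⟩

theorem image_Jle_subset (B : Set X) (m : ℕ) : δ '' Jle δ B m ⊆ Jle δ B (m + 1) := by
  rintro x ⟨y, hy, rfl⟩
  simp only [Jle, Set.mem_iUnion, Set.mem_image] at hy ⊢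
  obtain ⟨b, hb, i, hi, rfl⟩ := hy
  exact ⟨b, hb, i + 1, Nat.succ_le_succ hi, Function.iterate_succ_apply' δ i b⟩

theorem image_Jlt_singleton_subset (a : X) (n : ℕ) :
    δ '' Jlt δ {a} n ⊆ insert (δ^[n] a) (Jlt δ {a} n) := by
  rintro x ⟨y, hy, rfl⟩
  simp only [Jlt_singleton, Set.mem_image, Set.mem_Iio, Set.mem_insert_iff] at hy ⊢
  obtain ⟨i, hi, rfl⟩ := hy
  rw [← Function.iterate_succ_apply' δ i a]
  rcases (Nat.succ_le_of_lt hi).lt_or_eq with h | h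
  exacts [Or.inr ⟨i + 1, h, rfl⟩, Or.inl (by rw [h])]

end Jets

section Main

variable {X : Type*} {P : Pregeometry X} {δ : X → X} {a : X} {B : Set X}

theorem exists_iterate_mem_cl_Jlt_union_Jinf (ha : a ∈ clDelta P δ B) :
    ∃ n, δ^[n] a ∈ P.cl (Jlt δ {a} n ∪ Jinf δ B) := by
  classical
  by_contra! h
  rw [clDelta, Set.mem_ofPred_eq, Jinf_singleton] at ha
  refine (P.aleph0_le_clRank_range_of_forall_notMem_cl fun n => ?_).not_gt ha
  rw [Finset.coe_image, Finset.coe_range, Set.union_comm, ← Jlt_singleton]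
  exact h n

theorem exists_iterate_mem_cl_Jlt_union_Jle (ha : a ∈ clDelta P δ B) :
    ∃ n m, δ^[n] a ∈ P.cl (Jlt δ {a} n ∪ Jle δ B m) := by
  obtain ⟨n, hn⟩ := exists_iterate_mem_cl_Jlt_union_Jinf ha
  rw [Jinf_eq_iUnion_Jle] at hn
  exact ⟨n, P.exists_mem_cl_union_of_mem_cl_union_iUnion (Jle_mono δ B) hn⟩

theorem IsQuasiEndo.iterate_add_mem_cl_Jlt_union_Jle (hδ : IsQuasiEndo P δ) {n m : ℕ}
    (h : δ^[n] a ∈ P.cl (Jlt δ {a} n ∪ Jle δ B m)) (j : ℕ) :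
    δ^[n + j] a ∈ P.cl (Jlt δ {a} n ∪ Jle δ B (m + j)) := by
  induction j with
  | zero => exact h
  | succ j ih =>
    have hmono : Jlt δ {a} n ∪ Jle δ B m ⊆ Jlt δ {a} n ∪ Jle δ B (m + (j + 1)) :=
      Set.union_subset_union_right _ (Jle_mono δ B (by omega))
    have hstep : Jlt δ {a} n ∪ Jle δ B (m + j) ∪ δ '' (Jlt δ {a} n ∪ Jle δ B (m + j)) ⊆
        P.cl (Jlt δ {a} n ∪ Jle δ B (m + (j + 1))) := by
      rw [Set.image_union]
      rintro x ((hx | hx) | (hx | hx))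
      · exact P.subset_cl _ (Or.inl hx)
      · exact P.subset_cl _ (Or.inr (Jle_mono δ B (by omega) hx))
      · rcases image_Jlt_singleton_subset δ a n hx with rfl | hx
        exacts [P.mono _ _ hmono h, P.subset_cl _ (Or.inl hx)]
      · exact P.subset_cl _ (Or.inr (image_Jle_subset δ B (m + j) hx))
    rw [← Nat.add_assoc n, Function.iterate_succ_apply']
    exact P.cl_subset_cl_of_subset_cl hstep (hδ.apply_mem_cl_union_image ih)

end Main

/-- If `a ∈ cl^δ(B)`, then there are `n, m` such that
`δᵏ a ∈ cl(J^{n-1}(a) ∪ J^{m+k}(B))` for all `k ≥ n`. -/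
theorem clDelta_jet_bound {X : Type*} (P : Pregeometry X) (δ : X → X)
    (hδ : IsQuasiEndo P δ) (a : X) (B : Set X)
    (ha : a ∈ clDelta P δ B) :
    ∃ n m : ℕ, ∀ k : ℕ, n ≤ k →
      δ^[k] a ∈ P.cl (Jlt δ {a} n ∪ Jle δ B (m + k)) := by
  obtain ⟨n, m, h⟩ := exists_iterate_mem_cl_Jlt_union_Jle ha
  refine ⟨n, m, fun k hk => ?_⟩
  obtain ⟨j, rfl⟩ := Nat.exists_eq_add_of_le hk
  refine P.mono _ _ ?_ (hδ.iterate_add_mem_cl_Jlt_union_Jle h j)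
  exact Set.union_subset_union_right _ (Jle_mono δ B (by omega))
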